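/- The category of modules over a commutative ring R has enough pure injective objects: every R-module F embeds as a pure submodule in a pure injective R-module (namely F^{++} = Hom_R(Hom_R(F, J), J) for an injective cogenerator J). -/
import Mathlib


open TensorProduct LinearMap

section Defs
variable (R : Type) [CommRing R]

/-- `f, g` form a short exact sequence `0 → A → B → C → 0`. -/
def ShortExactSeq {A B C : Type} [AddCommGroup A] [AddCommGroup B] [AddCommGroup C]
    [Module R A] [Module R B] [Module R C] (f : A →ₗ[R] B) (g : B →ₗ[R] C) : Prop :=
  Function.Injective f ∧ Function.Exact f g ∧ Function.Surjective g

/-- The short exact sequence stays exact after tensoring with any module: purity. -/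
def IsPureSeq {A B C : Type} [AddCommGroup A] [AddCommGroup B] [AddCommGroup C]
    [Module R A] [Module R B] [Module R C] (f : A →ₗ[R] B) (g : B →ₗ[R] C) : Prop :=
  ∀ (M : Type) [AddCommGroup M] [Module R M],
    ShortExactSeq R (f.lTensor M) (g.lTensor M)

/-- Pure injectivity: maps into `E` extend along pure monomorphisms. -/
def IsPureInjective (E : Type) [AddCommGroup E] [Module R E] : Prop :=
  ∀ (A B C : Type) [AddCommGroup A] [AddCommGroup B] [AddCommGroup C]
    [Module R A] [Module R B] [Module R C] (f : A →ₗ[R] B) (g : B →ₗ[R] C),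
    ShortExactSeq R f g → IsPureSeq R f g →
    ∀ h : A →ₗ[R] E, ∃ h' : B →ₗ[R] E, h'.comp f = h

/-- `J` is an injective cogenerator: it is injective and `Hom(-, J)` is faithful. -/
def IsInjectiveCogenerator (J : Type) [AddCommGroup J] [Module R J] : Prop :=
  Module.Injective R J ∧
  ∀ (M : Type) [AddCommGroup M] [Module R M], (∀ φ : M →ₗ[R] J, φ = 0) → Subsingleton M

/-- The canonical evaluation map `λ_F : F → Hom(Hom(F, J), J)`, `x ↦ (φ ↦ φ x)`. -/
noncomputable def lamMap (J : Type) [AddCommGroup J] [Module R J]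
    (F : Type) [AddCommGroup F] [Module R F] : F →ₗ[R] ((F →ₗ[R] J) →ₗ[R] J) :=
  LinearMap.applyₗ

end Defs

section Aux

variable {R : Type} [CommRing R] {J : Type} [AddCommGroup J] [Module R J]

/-- A cogenerator separates points. -/
lemma cogen_sep (hJ : IsInjectiveCogenerator R J) {M : Type} [AddCommGroup M] [Module R M]
    {x : M} (hx : x ≠ 0) : ∃ φ : M →ₗ[R] J, φ x ≠ 0 := by
  by_contra h
  push_neg at h
  -- every map from the span of x to J is zero
  set K := Submodule.span R ({x} : Set M)
  have hK : ∀ ψ : K →ₗ[R] J, ψ = 0 := by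
    intro ψ
    obtain ⟨Ψ, hΨ⟩ := hJ.1.out K.subtype (Submodule.injective_subtype K) ψ
    have hx0 : ∀ y : K, (y : M) ∈ Submodule.span R ({x} : Set M) := fun y => y.2
    ext y
    obtain ⟨r, hr⟩ := Submodule.mem_span_singleton.mp (hx0 y)
    have : ψ y = Ψ (y : M) := (hΨ y).symm
    rw [this, ← hr]
    simp [map_smul, h Ψ]
  have : Subsingleton K := hJ.2 K hK
  have hxK : x ∈ K := Submodule.mem_span_singleton_self x
  have : (⟨x, hxK⟩ : K) = (⟨0, K.zero_mem⟩ : K) := Subsingleton.elim _ _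
  exact hx (by simpa using congrArg Subtype.val this)

/-- If the `J`-dual of `u` is surjective, `u` is injective. -/
lemma inj_of_dual_surj (hJ : IsInjectiveCogenerator R J) {X Y : Type}
    [AddCommGroup X] [AddCommGroup Y] [Module R X] [Module R Y] (u : X →ₗ[R] Y)
    (hs : ∀ φ : X →ₗ[R] J, ∃ ψ : Y →ₗ[R] J, ψ.comp u = φ) : Function.Injective u := by
  rw [← LinearMap.ker_eq_bot, eq_bot_iff]
  intro x hxk
  rw [Submodule.mem_bot]
  by_contra hx
  obtain ⟨φ, hφ⟩ := cogen_sep hJ hx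
  obtain ⟨ψ, hψ⟩ := hs φ
  apply hφ
  rw [← hψ]
  simp only [LinearMap.comp_apply]
  rw [LinearMap.mem_ker.mp hxk, map_zero]

/-- Any dual module `Hom(N, J)` is pure injective. -/
lemma dual_pureInjective (hJ : IsInjectiveCogenerator R J) (N : Type) [AddCommGroup N]
    [Module R N] : IsPureInjective R (N →ₗ[R] J) := by
  intro A B C _ _ _ _ _ _ f g _ hpure h
  -- h corresponds to a map N ⊗ A → J
  have hinj : Function.Injective (f.lTensor N) := (hpure N).1
  obtain ⟨G, hG⟩ := hJ.1.out (f.lTensor N) hinj (TensorProduct.lift h.flip)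
  refine ⟨(TensorProduct.curry G).flip, ?_⟩
  ext a n
  have := hG (n ⊗ₜ[R] a)
  simpa using this

/-- `id_M ⊗ λ_F` is injective. -/
lemma lTensor_lam_injective (hJ : IsInjectiveCogenerator R J)
    (F : Type) [AddCommGroup F] [Module R F] (M : Type) [AddCommGroup M] [Module R M] :
    Function.Injective ((lamMap R J F).lTensor M) := by
  apply inj_of_dual_surj hJ
  intro φ
  refine ⟨TensorProduct.lift ((lamMap R J (F →ₗ[R] J)).comp (TensorProduct.curry φ)), ?_⟩
  ext m x
  simp [lamMap]

end Aux

/-- `R`-Mod has enough pure injectives: every `F` embeds as a pure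
submodule into the pure injective module `F⁺⁺`, via `λ_F`. -/
theorem stmt5 (R : Type) [CommRing R] (J : Type) [AddCommGroup J] [Module R J]
    (hJ : IsInjectiveCogenerator R J)
    (F : Type) [AddCommGroup F] [Module R F] :
    IsPureInjective R ((F →ₗ[R] J) →ₗ[R] J) ∧
    Function.Injective (lamMap R J F) ∧
    ShortExactSeq R (lamMap R J F) (LinearMap.range (lamMap R J F)).mkQ ∧
    IsPureSeq R (lamMap R J F) (LinearMap.range (lamMap R J F)).mkQ := by
  have hlaminj : Function.Injective (lamMap R J F) := by
    intro x y hxy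
    by_contra hne
    have hne' : x - y ≠ 0 := sub_ne_zero.mpr hne
    obtain ⟨φ, hφ⟩ := cogen_sep hJ hne'
    apply hφ
    have : lamMap R J F (x - y) = 0 := by rw [map_sub, hxy, sub_self]
    simpa [lamMap] using congrFun (congrArg DFunLike.coe this) φ
  have hexact : Function.Exact (lamMap R J F) (LinearMap.range (lamMap R J F)).mkQ := by
    intro y
    simp [Submodule.Quotient.mk_eq_zero, LinearMap.mem_range, Set.mem_range]
  have hsurj : Function.Surjective (LinearMap.range (lamMap R J F)).mkQ :=
    Submodule.mkQ_surjective _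
  refine ⟨dual_pureInjective hJ _, hlaminj, ⟨hlaminj, hexact, hsurj⟩, ?_⟩
  intro M _ _
  exact ⟨lTensor_lam_injective hJ F M, lTensor_exact M hexact hsurj,
    LinearMap.lTensor_surjective M hsurj⟩
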